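/- Under the reset property, the conditional distribution of the sojourn time T_{n+1} − T_n given S_n = (past jump times and states) is inhomogeneous phase-type with initial distribution π_{Y_n}(T_n) and sub-intensity matrix function s ↦ M_{Y_n Y_n}(T_n + s); that is, P(T_{n+1} − T_n > u | S_n = s_n) = π_{y_n}(t_n) P̄_{y_n}(t_n, t_n + u) 1_{d_{y_n}}, independent of the past jump times and transitions except through (t_n, y_n). -/

import Mathlib

/-!
Under the reset property every inter-macrostate intensity `M_{ij}(x)` is the rank-one matrix
`β_{ij}(x)ᵀ π_j(x)`, so each jump multiplies the defective density `α` by such a matrix and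
leaves it proportional to `π_{y_{n+1}}(t_{n+1})`. Normalizing `α(s_n)` by its total mass then
returns exactly the probability vector `π_{y_n}(t_n)`.
-/

open Matrix

/-- The defective density row vector `α(s_n)` of the macro jump data. -/
noncomputable def alphaVec (J : ℕ) (d : Fin J → ℕ) (y : ℕ → Fin J) (t : ℕ → ℝ)
    (Pbar : ∀ i : Fin J, ℝ → ℝ → Matrix (Fin (d i)) (Fin (d i)) ℝ)
    (M : ∀ i j : Fin J, ℝ → Matrix (Fin (d i)) (Fin (d j)) ℝ)
    (π1 : Fin (d (y 0)) → ℝ) : (n : ℕ) → Fin (d (y n)) → ℝ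
  | 0 => π1
  | n + 1 =>
      (alphaVec J d y t Pbar M π1 n) ᵥ*
        (Pbar (y n) (t n) (t (n + 1)) * M (y n) (y (n + 1)) (t (n + 1)))

theorem vecMul_mul_vecMulVec {m ι κ R : Type*} [Fintype m] [Fintype ι] [CommSemiring R]
    (v : m → R) (A : Matrix m ι R) (w : ι → R) (p : κ → R) :
    v ᵥ* (A * vecMulVec w p) = (v ᵥ* A ⬝ᵥ w) • p := by
  rw [← vecMul_vecMul, vecMul_vecMulVec]

theorem sum_vecMul_div_sum_of_eq_smul {ι κ 𝕜 : Type*} [Fintype ι] [Fintype κ] [Field 𝕜]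
    {a p : ι → 𝕜} {c : 𝕜} (ha : a = c • p) (hp : ∑ i, p i = 1) (hmass : ∑ i, a i ≠ 0)
    (P : Matrix ι κ 𝕜) :
    (∑ k, (a ᵥ* P) k) / ∑ i, a i = ∑ k, (p ᵥ* P) k := by
  have hsum : ∑ i, a i = c := by
    simp only [ha, Pi.smul_apply, smul_eq_mul, ← Finset.mul_sum, hp, mul_one]
  rw [hsum] at hmass ⊢
  simp only [ha, smul_vecMul, Pi.smul_apply, smul_eq_mul, ← Finset.mul_sum]
  exact mul_div_cancel_left₀ _ hmass

theorem alphaVec_eq_smul_of_reset (J : ℕ) (d : Fin J → ℕ) (y : ℕ → Fin J) (t : ℕ → ℝ)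
    (Pbar : ∀ i : Fin J, ℝ → ℝ → Matrix (Fin (d i)) (Fin (d i)) ℝ)
    (M : ∀ i j : Fin J, ℝ → Matrix (Fin (d i)) (Fin (d j)) ℝ)
    (β : ∀ i : Fin J, Fin J → ℝ → Fin (d i) → ℝ) (πv : ∀ j : Fin J, ℝ → Fin (d j) → ℝ)
    (hreset : ∀ i j, i ≠ j → ∀ x, M i j x = vecMulVec (β i j x) (πv j x))
    (hjump : ∀ ℓ : ℕ, y ℓ ≠ y (ℓ + 1)) (π1 : Fin (d (y 0)) → ℝ)
    (hinit : π1 = πv (y 0) (t 0)) (n : ℕ) :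
    ∃ c : ℝ, alphaVec J d y t Pbar M π1 n = c • πv (y n) (t n) := by
  induction n with
  | zero => exact ⟨1, by rw [one_smul]; exact hinit⟩
  | succ m ih =>
    obtain ⟨c, hc⟩ := ih
    refine ⟨(c • πv (y m) (t m)) ᵥ* Pbar (y m) (t m) (t (m + 1)) ⬝ᵥ
      β (y m) (y (m + 1)) (t (m + 1)), ?_⟩
    rw [alphaVec, hc, hreset _ _ (hjump m), vecMul_mul_vecMulVec]

theorem sojourn_iph_reset_general (J : ℕ) (d : Fin J → ℕ) (y : ℕ → Fin J) (t : ℕ → ℝ)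
    (Pbar : ∀ i : Fin J, ℝ → ℝ → Matrix (Fin (d i)) (Fin (d i)) ℝ)
    (M : ∀ i j : Fin J, ℝ → Matrix (Fin (d i)) (Fin (d j)) ℝ)
    (β : ∀ i j : Fin J, ℝ → Fin (d i) → ℝ)
    (πv : ∀ j : Fin J, ℝ → Fin (d j) → ℝ)
    (hπ1 : ∀ j x, ∑ b, πv j x b = 1)
    (hreset : ∀ i j, i ≠ j → ∀ x, M i j x = vecMulVec (β i j x) (πv j x))
    (hjump : ∀ ℓ : ℕ, y ℓ ≠ y (ℓ + 1))
    (π1 : Fin (d (y 0)) → ℝ) (hinit : π1 = πv (y 0) (t 0)) (n : ℕ)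
    (hmass : 0 < ∑ b, alphaVec J d y t Pbar M π1 n b) :
    ∀ u : ℝ, 0 ≤ u →
      (∑ b, (alphaVec J d y t Pbar M π1 n ᵥ* Pbar (y n) (t n) (t n + u)) b) /
          (∑ b, alphaVec J d y t Pbar M π1 n b) =
        ∑ b, (πv (y n) (t n) ᵥ* Pbar (y n) (t n) (t n + u)) b := by
  obtain ⟨c, hc⟩ := alphaVec_eq_smul_of_reset J d y t Pbar M β πv hreset hjump π1 hinit n
  intro u _
  exact sum_vecMul_div_sum_of_eq_smul hc (hπ1 _ _) hmass.ne' _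

/-- Under the reset property, the conditional survival function of the sojourn time
`T_{n+1} − T_n` given the macro history `s_n`, which in general equals
`α(s_n) P̄_{y_n}(t_n, t_n+u) 1 / (α(s_n)1)`, equals `π_{y_n}(t_n) P̄_{y_n}(t_n, t_n+u) 1`:
it is inhomogeneous phase-type with initial vector `π_{y_n}(t_n)` and sub-intensity
`M_{y_n y_n}(t_n + ·)`, depending on the past only through `(t_n, y_n)`. -/
theorem sojourn_iph_reset (J : ℕ) (d : Fin J → ℕ) (y : ℕ → Fin J) (t : ℕ → ℝ)
    (Pbar : ∀ i : Fin J, ℝ → ℝ → Matrix (Fin (d i)) (Fin (d i)) ℝ)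
    (M : ∀ i j : Fin J, ℝ → Matrix (Fin (d i)) (Fin (d j)) ℝ)
    (β : ∀ i j : Fin J, ℝ → Fin (d i) → ℝ)
    (πv : ∀ j : Fin J, ℝ → Fin (d j) → ℝ)
    (hβ : ∀ i j x a, 0 ≤ β i j x a)
    (hπ0 : ∀ j x b, 0 ≤ πv j x b)
    (hπ1 : ∀ j x, ∑ b, πv j x b = 1)
    (hreset : ∀ i j, i ≠ j → ∀ x, M i j x = vecMulVec (β i j x) (πv j x))
    (hjump : ∀ ℓ : ℕ, y ℓ ≠ y (ℓ + 1))
    (π1 : Fin (d (y 0)) → ℝ) (hinit : π1 = πv (y 0) (t 0)) (n : ℕ)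
    (hmass : 0 < ∑ b, alphaVec J d y t Pbar M π1 n b) :
    ∀ u : ℝ, 0 ≤ u →
      (∑ b, (alphaVec J d y t Pbar M π1 n ᵥ* Pbar (y n) (t n) (t n + u)) b) /
          (∑ b, alphaVec J d y t Pbar M π1 n b) =
        ∑ b, (πv (y n) (t n) ᵥ* Pbar (y n) (t n) (t n + u)) b :=
  sojourn_iph_reset_general J d y t Pbar M β πv hπ1 hreset hjump π1 hinit n hmass
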